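/- Let G be a K_{3,3}-saturated graph with a vertex a of degree d(a) = δ(G), and let V_1 = N[a]. Partition V \ V_1 according to the number of neighbors in N(a). If x, y are two non-adjacent vertices both outside V_1 with N(x) ∩ N(a) = N(y) ∩ N(a) = ∅ and |N(x)| = |N(y)| = 2, then G + xy contains a K_{3,3}, and hence there exist two neighbors of x and two neighbors of y forming a complete bipartite K_{2,2} avoiding x and y. -/
import Mathlib

open SimpleGraph

/-- `G` contains a subgraph isomorphic to `K_{3,3}`. -/
def ContainsK33 {V : Type*} (G : SimpleGraph V) : Prop :=
  ∃ f : Fin 3 ⊕ Fin 3 → V, Function.Injective f ∧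
    ∀ a b, (completeBipartiteGraph (Fin 3) (Fin 3)).Adj a b → G.Adj (f a) (f b)

/-- `G` is `K_{3,3}`-saturated. -/
def K33Saturated {V : Type*} (G : SimpleGraph V) : Prop :=
  ¬ ContainsK33 G ∧
    ∀ x y : V, x ≠ y → ¬ G.Adj x y → ContainsK33 (G ⊔ SimpleGraph.edge x y)

private lemma fin3_aux (i : Fin 3) : ∃ i1 i2 : Fin 3, i1 ≠ i2 ∧ i1 ≠ i ∧ i2 ≠ i := by revert i; decide

private lemma key_lemma {V : Type*} (G : SimpleGraph V) (x y : V) (hxy : x ≠ y)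
    (f : Fin 3 ⊕ Fin 3 → V) (hinj : Function.Injective f)
    (hadj : ∀ a b, (completeBipartiteGraph (Fin 3) (Fin 3)).Adj a b →
      (G ⊔ SimpleGraph.edge x y).Adj (f a) (f b))
    (i j : Fin 3) (hfx : f (Sum.inl i) = x) (hfy : f (Sum.inr j) = y) :
    ∃ x1 x2 y1 y2 : V, x1 ∈ G.neighborSet x ∧ x2 ∈ G.neighborSet x ∧
      y1 ∈ G.neighborSet y ∧ y2 ∈ G.neighborSet y ∧ x1 ≠ x2 ∧ y1 ≠ y2 ∧
      x1 ∉ ({x, y} : Set V) ∧ x2 ∉ ({x, y} : Set V) ∧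
      y1 ∉ ({x, y} : Set V) ∧ y2 ∉ ({x, y} : Set V) ∧
      G.Adj x1 y1 ∧ G.Adj x1 y2 ∧ G.Adj x2 y1 ∧ G.Adj x2 y2 := by
  obtain ⟨j1, j2, hj12, hj1, hj2⟩ := fin3_aux j
  obtain ⟨i1, i2, hi12, hi1, hi2⟩ := fin3_aux i
  have hne : ∀ a b : Fin 3 ⊕ Fin 3, a ≠ b → f a ≠ f b := fun a b h hh => h (hinj hh)
  have hG' : ∀ a b, (completeBipartiteGraph (Fin 3) (Fin 3)).Adj a b →
      (f a ≠ x ∨ f b ≠ y) → (f a ≠ y ∨ f b ≠ x) → G.Adj (f a) (f b) := by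
    intro a b hab h1 h2
    rcases hadj a b hab with h | h
    · exact h
    · rw [SimpleGraph.edge_adj] at h
      rcases h.1 with ⟨ha, hb⟩ | ⟨ha, hb⟩ <;> tauto
  -- facts about f-values
  have hx1 : f (Sum.inr j1) ≠ x := fun h =>
    hne (Sum.inr j1) (Sum.inl i) (by simp) (h.trans hfx.symm)
  have hx2 : f (Sum.inr j2) ≠ x := fun h =>
    hne (Sum.inr j2) (Sum.inl i) (by simp) (h.trans hfx.symm)
  have hy1 : f (Sum.inr j1) ≠ y := fun h =>
    hne (Sum.inr j1) (Sum.inr j) (by simp [hj1]) (h.trans hfy.symm)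
  have hy2 : f (Sum.inr j2) ≠ y := fun h =>
    hne (Sum.inr j2) (Sum.inr j) (by simp [hj2]) (h.trans hfy.symm)
  have hx1' : f (Sum.inl i1) ≠ x := fun h =>
    hne (Sum.inl i1) (Sum.inl i) (by simp [hi1]) (h.trans hfx.symm)
  have hx2' : f (Sum.inl i2) ≠ x := fun h =>
    hne (Sum.inl i2) (Sum.inl i) (by simp [hi2]) (h.trans hfx.symm)
  have hy1' : f (Sum.inl i1) ≠ y := fun h =>
    hne (Sum.inl i1) (Sum.inr j) (by simp) (h.trans hfy.symm)
  have hy2' : f (Sum.inl i2) ≠ y := fun h =>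
    hne (Sum.inl i2) (Sum.inr j) (by simp) (h.trans hfy.symm)
  refine ⟨f (Sum.inr j1), f (Sum.inr j2), f (Sum.inl i1), f (Sum.inl i2), ?_, ?_, ?_, ?_,
    ?_, ?_, ?_, ?_, ?_, ?_, ?_, ?_, ?_, ?_⟩
  · have := hG' (Sum.inl i) (Sum.inr j1) (by simp) (Or.inr hy1) (Or.inr hx1)
    rw [hfx] at this; exact this
  · have := hG' (Sum.inl i) (Sum.inr j2) (by simp) (Or.inr hy2) (Or.inr hx2)
    rw [hfx] at this; exact this
  · have := hG' (Sum.inl i1) (Sum.inr j) (by simp) (Or.inl hx1') (Or.inl hy1')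
    rw [hfy] at this; exact this.symm
  · have := hG' (Sum.inl i2) (Sum.inr j) (by simp) (Or.inl hx2') (Or.inl hy2')
    rw [hfy] at this; exact this.symm
  · exact hne _ _ (by simp [hj12])
  · exact hne _ _ (by simp [hi12])
  · simp [hx1, hy1]
  · simp [hx2, hy2]
  · simp [hx1', hy1']
  · simp [hx2', hy2']
  · exact (hG' (Sum.inl i1) (Sum.inr j1) (by simp) (Or.inl hx1') (Or.inl hy1')).symm
  · exact (hG' (Sum.inl i2) (Sum.inr j1) (by simp) (Or.inl hx2') (Or.inl hy2')).symm
  · exact (hG' (Sum.inl i1) (Sum.inr j2) (by simp) (Or.inl hx1') (Or.inl hy1')).symm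
  · exact (hG' (Sum.inl i2) (Sum.inr j2) (by simp) (Or.inl hx2') (Or.inl hy2')).symm

theorem stmt_16 {V : Type*} [Fintype V] (G : SimpleGraph V) [DecidableRel G.Adj]
    (hG : K33Saturated G) (a : V) (hmin : ∀ v : V, G.degree a ≤ G.degree v)
    (x y : V) (hx : x ∉ insert a (G.neighborSet a)) (hy : y ∉ insert a (G.neighborSet a))
    (hxy : x ≠ y) (hnadj : ¬ G.Adj x y)
    (hxN : G.neighborSet x ∩ G.neighborSet a = ∅)
    (hyN : G.neighborSet y ∩ G.neighborSet a = ∅)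
    (hdx : G.degree x = 2) (hdy : G.degree y = 2) :
    ContainsK33 (G ⊔ SimpleGraph.edge x y) ∧
    ∃ x1 x2 y1 y2 : V, x1 ∈ G.neighborSet x ∧ x2 ∈ G.neighborSet x ∧
      y1 ∈ G.neighborSet y ∧ y2 ∈ G.neighborSet y ∧ x1 ≠ x2 ∧ y1 ≠ y2 ∧
      x1 ∉ ({x, y} : Set V) ∧ x2 ∉ ({x, y} : Set V) ∧
      y1 ∉ ({x, y} : Set V) ∧ y2 ∉ ({x, y} : Set V) ∧
      G.Adj x1 y1 ∧ G.Adj x1 y2 ∧ G.Adj x2 y1 ∧ G.Adj x2 y2 := by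
  have hK := hG.2 x y hxy hnadj
  refine ⟨hK, ?_⟩
  obtain ⟨f, hinj, hadj⟩ := hK
  have hex : ∃ A B, (completeBipartiteGraph (Fin 3) (Fin 3)).Adj A B ∧ f A = x ∧ f B = y := by
    by_contra h
    push_neg at h
    apply hG.1
    refine ⟨f, hinj, fun A B hAB => ?_⟩
    rcases hadj A B hAB with hg | hg
    · exact hg
    · rw [SimpleGraph.edge_adj] at hg
      rcases hg.1 with ⟨hA, hB⟩ | ⟨hA, hB⟩
      · exact absurd hB (h A B hAB hA)
      · exact absurd hA (h B A hAB.symm hB)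
  obtain ⟨A, B, hAB, hAx, hBy⟩ := hex
  rcases A with i | i <;> rcases B with j | j
  · simp at hAB
  · exact key_lemma G x y hxy f hinj hadj i j hAx hBy
  · -- A = inr i, B = inl j : use f ∘ Sum.swap
    have hswap : ∀ a b : Fin 3 ⊕ Fin 3, (completeBipartiteGraph (Fin 3) (Fin 3)).Adj a b →
        (completeBipartiteGraph (Fin 3) (Fin 3)).Adj a.swap b.swap := by
      rintro (a | a) (b | b) <;> simp
    exact key_lemma G x y hxy (f ∘ Sum.swap) (hinj.comp fun a b h => by rw [← Sum.swap_swap a, h, Sum.swap_swap])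
      (fun a b hab => hadj _ _ (hswap a b hab)) i j hAx hBy
  · simp at hAB
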